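/- arXiv:1901.01090 — 2 statements merged into one kernel-verified Lean document; each statement's English description precedes it below -/
import Mathlib

section
/- For all simple graphs G and H and every d ≥ 1, there exists a graph homomorphism G ⋉ d → H if and only if there exists a graph homomorphism G → H/d. (Blowup and fractionalization are Galois adjoints.) -/
open SimpleGraph

universe u v

/-- The join `G + H` of two simple graphs. -/
def graphJoin {α : Type u} {β : Type v} (G : SimpleGraph α) (H : SimpleGraph β) :
    SimpleGraph (α ⊕ β) where
  Adj x y :=
    match x, y with
    | Sum.inl a, Sum.inl a' => G.Adj a a'
    | Sum.inr b, Sum.inr b' => H.Adj b b'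
    | Sum.inl _, Sum.inr _ => True
    | Sum.inr _, Sum.inl _ => True
  symm := by
    refine ⟨?_⟩
    rintro (a | b) (a' | b') h
    · exact G.adj_symm h
    · trivial
    · trivial
    · exact H.adj_symm h
  loopless := by
    refine ⟨?_⟩
    rintro (a | b) h
    · exact G.irrefl h
    · exact H.irrefl h

/-- The disjunctive product `G * H`. -/
def disjProd {α : Type u} {β : Type v} (G : SimpleGraph α) (H : SimpleGraph β) :
    SimpleGraph (α × β) where
  Adj p q := G.Adj p.1 q.1 ∨ H.Adj p.2 q.2
  symm := ⟨fun p q h => h.imp (fun h' => G.adj_symm h') (fun h' => H.adj_symm h')⟩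
  loopless := ⟨fun p h => h.elim (fun h' => G.irrefl h') (fun h' => H.irrefl h')⟩

/-- The lexicographic product `G ⋉ H`. -/
def lexProd {α : Type u} {β : Type v} (G : SimpleGraph α) (H : SimpleGraph β) :
    SimpleGraph (α × β) where
  Adj p q := G.Adj p.1 q.1 ∨ (p.1 = q.1 ∧ H.Adj p.2 q.2)
  symm := ⟨fun p q h => h.imp (fun h' => G.adj_symm h') (fun h' => ⟨h'.1.symm, H.adj_symm h'.2⟩)⟩
  loopless := ⟨fun p h => h.elim (fun h' => G.irrefl h') (fun h' => H.irrefl h'.2)⟩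

/-- The `d`-fold blowup `G ⋉ d`, i.e. the lexicographic product `G ⋉ K_d`. -/
def blowup {α : Type u} (G : SimpleGraph α) (d : ℕ) : SimpleGraph (α × Fin d) :=
  lexProd G (⊤ : SimpleGraph (Fin d))

/-- The `d`-fractionalization `G/d`: the graph of `d`-cliques of `G`, with two
`d`-cliques adjacent iff they are disjoint and pairwise adjacent. -/
def fracGraph {α : Type u} (G : SimpleGraph α) (d : ℕ) :
    SimpleGraph {S : Finset α // S.card = d ∧ G.IsClique (S : Set α)} where
  Adj S T := S ≠ T ∧ Disjoint S.val T.val ∧ ∀ a ∈ S.val, ∀ b ∈ T.val, G.Adj a b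
  symm := by
    refine ⟨?_⟩
    rintro S T ⟨hne, hd, hadj⟩
    exact ⟨hne.symm, hd.symm, fun b hb a ha => (hadj a ha b hb).symm⟩
  loopless := ⟨fun S h => h.1 rfl⟩

/-- The `n`-fold disjunctive power `G^{*n}`. -/
def disjPow {α : Type u} (G : SimpleGraph α) (n : ℕ) :
    SimpleGraph (Fin n → α) where
  Adj f g := ∃ i, G.Adj (f i) (g i)
  symm := ⟨fun f g ⟨i, h⟩ => ⟨i, h.symm⟩⟩
  loopless := ⟨fun f ⟨i, h⟩ => G.irrefl h⟩

/-- A semiring family of graphs. -/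
structure SemiringFamily where
  V : ℕ → Type u
  F : ∀ n, SimpleGraph (V n)
  isEmpty_zero : IsEmpty (V 0)
  nonempty_one : Nonempty (V 1)
  add_hom : ∀ n m : ℕ, Nonempty (graphJoin (F n) (F m) →g F (n + m))
  mul_hom : ∀ n m : ℕ, Nonempty (disjProd (F n) (F m) →g F (n * m))

/-- The `F`-number: the least `n` such that `G → F_n`. -/
noncomputable def etaF (F : SemiringFamily.{u}) {α : Type v} (G : SimpleGraph α) : ℕ :=
  sInf {n : ℕ | Nonempty (G →g F.F n)}

/-- The fractional `F`-number. -/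
noncomputable def etaFrac (F : SemiringFamily.{u}) {α : Type v} (G : SimpleGraph α) : ℝ :=
  sInf {x : ℝ | ∃ n d : ℕ, 1 ≤ d ∧ Nonempty (G →g fracGraph (F.F n) d) ∧ x = (n : ℝ) / d}

/-- The asymptotic `F`-number. -/
noncomputable def etaAsymp (F : SemiringFamily.{u}) {α : Type v} (G : SimpleGraph α) : ℝ :=
  sInf {x : ℝ | ∃ n : ℕ, 1 ≤ n ∧ x = (etaF F (disjPow G n) : ℝ) ^ ((1 : ℝ) / n)}

/-- The orthogonal complement of a set of vertices. -/
def perp {α : Type u} (G : SimpleGraph α) (S : Set α) : Set α :=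
  {v | ∀ s ∈ S, G.Adj v s}

/-- A flat is a set of vertices with `S^{⊥⊥} = S`. -/
def IsFlat {α : Type u} (G : SimpleGraph α) (S : Set α) : Prop :=
  perp G (perp G S) = S

/-- Homomorphic equivalence of two graphs. -/
def HomEquiv {α : Type u} {β : Type v} (G : SimpleGraph α) (H : SimpleGraph β) : Prop :=
  Nonempty (G →g H) ∧ Nonempty (H →g G)

/-- A linear-like semiring family: every flat of `F_n` induces a subgraph with some
clique number `k`, homomorphically equivalent to `F_k`. -/
structure LinearLikeFamily extends SemiringFamily where
  linearLike : ∀ n (S : Set (V n)), IsFlat (F n) S →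
    ∃ k : ℕ, (∃ s : Finset S, ((F n).induce S).IsNClique k s) ∧
      (∀ s : Finset S, ¬ ((F n).induce S).IsNClique (k + 1) s) ∧
      HomEquiv ((F n).induce S) (F k)

/-! A homomorphism `G ⋉ d → H` sends each fibre `{v} × K_d` injectively onto a `d`-clique of
`H`, and adjacent vertices of `G` to cliques that are completely joined; conversely, enumerating
the `d`-clique assigned to each vertex of `G` turns a homomorphism `G → H/d` into one
`G ⋉ d → H`. -/

namespace SimpleGraph

variable {α : Type u} {β : Type v} {G : SimpleGraph α} {H : SimpleGraph β} {d : ℕ}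

theorem blowup_adj {p q : α × Fin d} :
    (blowup G d).Adj p q ↔ G.Adj p.1 q.1 ∨ (p.1 = q.1 ∧ p.2 ≠ q.2) := by
  simp only [blowup, lexProd, top_adj]

theorem fracGraph_adj_iff (hd : 1 ≤ d)
    {S T : {S : Finset β // S.card = d ∧ H.IsClique (S : Set β)}} :
    (fracGraph H d).Adj S T ↔ ∀ a ∈ S.val, ∀ b ∈ T.val, H.Adj a b := by
  refine ⟨fun h => h.2.2, fun hST => ?_⟩
  have hdisj : Disjoint S.val T.val :=
    Finset.disjoint_left.2 fun a haS haT => H.irrefl (hST a haS a haT)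
  refine ⟨fun hEq => ?_, hdisj, hST⟩
  obtain ⟨a, ha⟩ : S.val.Nonempty := Finset.card_pos.1 (by rw [S.2.1]; exact hd)
  exact Finset.disjoint_left.1 hdisj ha (hEq ▸ ha)

namespace Hom

theorem injective_fibre (f : blowup G d →g H) (v : α) : Function.Injective fun i => f (v, i) :=
  fun i j hij => by_contra fun hne =>
    (f.map_adj ((blowup_adj (p := (v, i)) (q := (v, j))).2 (Or.inr ⟨rfl, hne⟩))).ne hij

variable [DecidableEq β]

def fibreImage (f : blowup G d →g H) (v : α) : Finset β :=
  Finset.univ.image fun i => f (v, i)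

theorem card_fibreImage (f : blowup G d →g H) (v : α) : (f.fibreImage v).card = d := by
  rw [fibreImage, Finset.card_image_of_injective _ (f.injective_fibre v), Finset.card_univ,
    Fintype.card_fin]

theorem isClique_fibreImage (f : blowup G d →g H) (v : α) :
    H.IsClique (f.fibreImage v : Set β) := by
  rintro _ hx _ hy hxy
  simp only [fibreImage, Finset.coe_image, Finset.coe_univ, Set.image_univ, Set.mem_range] at hx hy
  obtain ⟨i, rfl⟩ := hx
  obtain ⟨j, rfl⟩ := hy
  exact f.map_adj
    (blowup_adj.2 (Or.inr ⟨rfl, fun hij => hxy (congrArg (fun k => f (v, k)) hij)⟩))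

theorem adj_of_mem_fibreImage (f : blowup G d →g H) {v w : α} (hvw : G.Adj v w)
    {a b : β} (ha : a ∈ f.fibreImage v) (hb : b ∈ f.fibreImage w) : H.Adj a b := by
  simp only [fibreImage, Finset.mem_image, Finset.mem_univ, true_and] at ha hb
  obtain ⟨i, rfl⟩ := ha
  obtain ⟨j, rfl⟩ := hb
  exact f.map_adj (blowup_adj.2 (Or.inl hvw))

def toFracGraph (f : blowup G d →g H) (hd : 1 ≤ d) : G →g fracGraph H d where
  toFun v := ⟨f.fibreImage v, f.card_fibreImage v, f.isClique_fibreImage v⟩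
  map_rel' hvw := (fracGraph_adj_iff hd).2 fun _ ha _ hb => f.adj_of_mem_fibreImage hvw ha hb

end Hom

noncomputable def fracGraphEnum (S : {S : Finset β // S.card = d ∧ H.IsClique (S : Set β)}) :
    Fin d ≃ S.val :=
  (Fintype.equivFinOfCardEq (by simpa using S.2.1)).symm

noncomputable def Hom.ofFracGraph (g : G →g fracGraph H d) : blowup G d →g H where
  toFun p := fracGraphEnum (g p.1) p.2
  map_rel' := by
    rintro ⟨v, i⟩ ⟨w, j⟩ hadj
    rcases blowup_adj.1 hadj with hvw | ⟨rfl, hij⟩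
    · exact (g.map_adj hvw).2.2 _ (fracGraphEnum (g v) i).2 _ (fracGraphEnum (g w) j).2
    · refine (g v).2.2 (fracGraphEnum (g v) i).2 (fracGraphEnum (g v) j).2 fun hEq => hij ?_
      exact (fracGraphEnum (g v)).injective (Subtype.ext hEq)

end SimpleGraph

/-- Blowup and fractionalization are Galois adjoints. -/
theorem blowup_fracGraph_adjunction {α : Type u} {β : Type v}
    (G : SimpleGraph α) (H : SimpleGraph β) (d : ℕ) (hd : 1 ≤ d) :
    Nonempty (blowup G d →g H) ↔ Nonempty (G →g fracGraph H d) := by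
  classical
  exact ⟨fun ⟨f⟩ => ⟨f.toFracGraph hd⟩, fun ⟨g⟩ => ⟨g.ofFracGraph⟩⟩
end

section
/- Let (F_n) be a linear-like semiring family of graphs and let G and H be finite simple graphs. Then the F-number and the fractional F-number are additive under joins: η_F(G + H) = η_F(G) + η_F(H) and η_F^frac(G + H) = η_F^frac(G) + η_F^frac(H). -/
open SimpleGraph

universe u v

universe w

/-!
Subadditivity holds for every semiring family: combine `G → F_n` and `H → F_m` into
`G + H → F_n + F_m → F_{n+m}`; fractionally, first rescale `F_n/d → F_{ne}/(de)` by taking the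
disjunctive product with an `e`-clique of `F_e`.

For superadditivity, a homomorphism `G + H → F_N` (or to `F_N/d`) puts the images of `G` and `H`
into cross-adjacent vertex sets `A`, `B`. These lie in the flats `A^⊥⊥` and `A^⊥`, which by
linear-likeness map to `F_k` and `F_{k'}`, with `k`, `k'` their clique numbers. The union of two
such cliques is a clique, so `k + k'` is at most the clique number of `F_N`, and that number is
`N`: the flat `univ` makes `F_N` homomorphically equivalent to `F_m` with `m = ω(F_N) ≥ N`, and
splitting an `m`-clique of `F_m` into `N` and `m - N` vertices gives flats with `k ≥ N`,
`k' ≥ m - N` and `k + k' ≤ m`. Hence `k = N`, and `F_N = F_k` maps into `F_m[A^⊥⊥]`, whose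
clique number is `N`.
-/

namespace SimpleGraph

variable {α β : Type*} {G : SimpleGraph α} {H : SimpleGraph β} {n : ℕ}

theorem CliqueFree.comap_hom (f : G →g H) (h : H.CliqueFree n) : G.CliqueFree n := by
  contrapose h
  rw [not_cliqueFree_iff_top_isContained] at h ⊢
  obtain ⟨c⟩ := h
  exact ⟨(f.comp c.toHom).toCopy (Hom.injective_of_top_hom _)⟩

theorem CliqueFree.lt_of_not {m : ℕ} (h : G.CliqueFree n) (h' : ¬G.CliqueFree m) : m < n :=
  lt_of_not_ge fun hnm => h' (h.mono hnm)

theorem CliqueFreeOn.lt_of_not {s : Set α} {m : ℕ} (h : G.CliqueFreeOn s n)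
    (h' : ¬G.CliqueFreeOn s m) : m < n :=
  lt_of_not_ge fun hnm => h' (CliqueFreeOn.mono G hnm h)

theorem IsNClique.image_hom [DecidableEq β] {s : Finset α} (f : G →g H) (h : G.IsNClique n s) :
    H.IsNClique n (s.image f) := by
  refine ⟨?_, ?_⟩
  · rw [Finset.coe_image]
    rintro _ ⟨a, ha, rfl⟩ _ ⟨b, hb, rfl⟩ hab
    exact f.map_adj (h.isClique ha hb fun hab' => hab (hab' ▸ rfl))
  · rw [Finset.card_image_of_injOn fun a ha b hb hab => by_contra fun hne =>
      (f.map_adj (h.isClique ha hb hne)).ne hab, h.card_eq]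

theorem IsNClique.union_of_forall_adj [DecidableEq α] {s t : Finset α} {k k' : ℕ}
    (hs : G.IsNClique k s) (ht : G.IsNClique k' t) (hst : ∀ a ∈ s, ∀ b ∈ t, G.Adj a b) :
    G.IsNClique (k + k') (s ∪ t) := by
  have hdisj : Disjoint s t :=
    Finset.disjoint_left.2 fun a has hat => G.irrefl (hst a has a hat)
  refine ⟨?_, by rw [Finset.card_union_of_disjoint hdisj, hs.card_eq, ht.card_eq]⟩
  rw [Finset.coe_union, IsClique, Set.pairwise_union]
  exact ⟨hs.isClique, ht.isClique, fun a ha b hb _ => ⟨hst a ha b hb, (hst a ha b hb).symm⟩⟩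

theorem IsNClique.disjProd {s : Finset α} {t : Finset β} {a b : ℕ} (hs : G.IsNClique a s)
    (ht : H.IsNClique b t) : (disjProd G H).IsNClique (a * b) (s ×ˢ t) := by
  refine ⟨?_, by rw [Finset.card_product, hs.card_eq, ht.card_eq]⟩
  rintro ⟨x, y⟩ hxy ⟨x', y'⟩ hxy' hne
  simp only [Finset.coe_product, Set.mem_prod, Finset.mem_coe] at hxy hxy'
  by_cases hx : x = x'
  · subst hx
    exact Or.inr (ht.isClique hxy.2 hxy'.2 fun hy => hne (hy ▸ rfl))
  · exact Or.inl (hs.isClique hxy.1 hxy'.1 hx)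

theorem add_le_of_forall_adj {N k k' : ℕ} (hG : G.CliqueFree (N + 1)) {A B : Set α}
    (hAB : ∀ a ∈ A, ∀ b ∈ B, G.Adj a b) (hA : ¬G.CliqueFreeOn A k)
    (hB : ¬G.CliqueFreeOn B k') : k + k' ≤ N := by
  classical
  simp only [CliqueFreeOn, not_forall, not_not] at hA hB
  obtain ⟨s, hsA, hs⟩ := hA
  obtain ⟨t, htB, ht⟩ := hB
  have hst := hs.union_of_forall_adj ht fun a ha b hb => hAB a (hsA ha) b (htB hb)
  exact Nat.lt_succ_iff.1 (hG.lt_of_not hst.not_cliqueFree)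

end SimpleGraph

section Flats

variable {α : Type*} (G : SimpleGraph α)

theorem subset_perp_perp (S : Set α) : S ⊆ perp G (perp G S) :=
  fun v hv _ hw => (hw v hv).symm

theorem perp_anti {S T : Set α} (h : S ⊆ T) : perp G T ⊆ perp G S :=
  fun _ hv s hs => hv s (h hs)

theorem isFlat_perp (S : Set α) : IsFlat G (perp G S) :=
  (perp_anti G (subset_perp_perp G S)).antisymm (subset_perp_perp G (perp G S))

theorem isFlat_univ : IsFlat G Set.univ := by
  have hempty : perp G Set.univ = ∅ :=
    Set.eq_empty_of_forall_notMem fun v hv => G.irrefl (hv v trivial)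
  rw [IsFlat, hempty]
  exact Set.eq_univ_of_forall fun _ _ h => h.elim

end Flats

namespace graphJoin

variable {α β α' β' : Type*} {G : SimpleGraph α} {H : SimpleGraph β}
  {G' : SimpleGraph α'} {H' : SimpleGraph β'}

theorem adj_inl_inr (a : α) (b : β) : (graphJoin G H).Adj (.inl a) (.inr b) := trivial

def inlHom (G : SimpleGraph α) (H : SimpleGraph β) : G →g graphJoin G H := ⟨Sum.inl, id⟩

def inrHom (G : SimpleGraph α) (H : SimpleGraph β) : H →g graphJoin G H := ⟨Sum.inr, id⟩

def map (φ : G →g G') (ψ : H →g H') : graphJoin G H →g graphJoin G' H' where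
  toFun := Sum.map φ ψ
  map_rel' := by
    rintro (a | b) (a' | b') h
    exacts [φ.map_adj h, trivial, trivial, ψ.map_adj h]

theorem top_top : graphJoin (⊤ : SimpleGraph α) (⊤ : SimpleGraph β) = ⊤ := by
  ext x y
  cases x <;> cases y <;> simp [graphJoin]

end graphJoin

namespace fracGraph

variable {α β γ : Type*} {G : SimpleGraph α} {H : SimpleGraph β} {K : SimpleGraph γ} {d : ℕ}

def ofIsNClique {s : Finset α} (h : G.IsNClique d s) :
    {S : Finset α // S.card = d ∧ G.IsClique (S : Set α)} :=
  ⟨s, h.card_eq, h.isClique⟩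

theorem isNClique (S : {S : Finset α // S.card = d ∧ G.IsClique (S : Set α)}) :
    G.IsNClique d S.1 :=
  ⟨S.2.2, S.2.1⟩

theorem pos_of_adj {S T : {S : Finset α // S.card = d ∧ G.IsClique (S : Set α)}}
    (h : (fracGraph G d).Adj S T) : 0 < d := by
  refine Nat.pos_of_ne_zero fun hd => h.1 (Subtype.ext ?_)
  rw [Finset.card_eq_zero.1 (S.2.1.trans hd), Finset.card_eq_zero.1 (T.2.1.trans hd)]

theorem adj_of_forall_adj (hd : 0 < d)
    {S T : {S : Finset α // S.card = d ∧ G.IsClique (S : Set α)}}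
    (h : ∀ a ∈ S.1, ∀ b ∈ T.1, G.Adj a b) : (fracGraph G d).Adj S T := by
  have hdisj : Disjoint S.1 T.1 :=
    Finset.disjoint_left.2 fun a haS haT => G.irrefl (h a haS a haT)
  obtain ⟨a, ha⟩ := Finset.card_pos.1 (S.2.1.symm ▸ hd : 0 < S.1.card)
  exact ⟨fun hST => Finset.disjoint_left.1 hdisj ha (by rwa [← hST]), hdisj, h⟩

def singletonHom (G : SimpleGraph α) : G →g fracGraph G 1 where
  toFun v := ⟨{v}, Finset.card_singleton v, by simp⟩
  map_rel' h := adj_of_forall_adj one_pos <| by simpa using h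

def prodHom {c : ℕ} {C : Finset β} (hC : H.IsNClique c C) (hc : 0 < c) :
    fracGraph G d →g fracGraph (disjProd G H) (d * c) where
  toFun S := ofIsNClique ((isNClique S).disjProd hC)
  map_rel' {S T} hST := by
    refine adj_of_forall_adj (Nat.mul_pos (pos_of_adj hST) hc) ?_
    rintro ⟨x, y⟩ hxy ⟨x', y'⟩ hxy'
    simp only [ofIsNClique, Finset.mem_product] at hxy hxy'
    exact Or.inl (hST.2.2 x hxy.1 x' hxy'.1)

section Maps

open scoped Classical

noncomputable def map (f : G →g H) : fracGraph G d →g fracGraph H d where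
  toFun S := ofIsNClique ((isNClique S).image_hom f)
  map_rel' {S T} hST := by
    refine adj_of_forall_adj (pos_of_adj hST) ?_
    simp only [ofIsNClique, Finset.mem_image]
    rintro _ ⟨a, ha, rfl⟩ _ ⟨b, hb, rfl⟩
    exact f.map_adj (hST.2.2 a ha b hb)

noncomputable def codRestrict (f : K →g fracGraph G d) (A : Set α)
    (hA : ∀ v, ∀ a ∈ (f v).1, a ∈ A) : K →g fracGraph (G.induce A) d where
  toFun v := ofIsNClique (s := (f v).1.subtype (· ∈ A)) <| by
    rw [isNClique_induce_iff, Finset.subtype_map, Finset.filter_true_of_mem (hA v)]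
    exact isNClique (f v)
  map_rel' {v w} hvw := by
    refine adj_of_forall_adj (pos_of_adj (f.map_adj hvw)) ?_
    simp only [ofIsNClique, Finset.mem_subtype]
    exact fun a ha b hb => (f.map_adj hvw).2.2 a ha b hb

noncomputable def joinHom (hd : 0 < d) :
    graphJoin (fracGraph G d) (fracGraph H d) →g fracGraph (graphJoin G H) d where
  toFun := Sum.elim (map (graphJoin.inlHom G H)) (map (graphJoin.inrHom G H))
  map_rel' := by
    rintro (S | S) (T | T) hST
    · exact (map (graphJoin.inlHom G H)).map_adj hST
    · refine adj_of_forall_adj hd ?_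
      simp only [Sum.elim_inl, Sum.elim_inr, map, ofIsNClique, RelHom.coeFn_mk, Finset.mem_image]
      rintro _ ⟨a, -, rfl⟩ _ ⟨b, -, rfl⟩
      exact graphJoin.adj_inl_inr a b
    · refine adj_of_forall_adj hd ?_
      simp only [Sum.elim_inl, Sum.elim_inr, map, ofIsNClique, RelHom.coeFn_mk, Finset.mem_image]
      rintro _ ⟨b, -, rfl⟩ _ ⟨a, -, rfl⟩
      exact (graphJoin.adj_inl_inr a b).symm
    · exact (map (graphJoin.inrHom G H)).map_adj hST

end Maps

end fracGraph

namespace SemiringFamily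

variable (F : SemiringFamily.{u})

theorem nonempty_hom_completeGraph : ∀ m : ℕ, Nonempty (completeGraph (Fin m) →g F.F m)
  | 0 => ⟨⟨Fin.elim0, fun {a} => a.elim0⟩⟩
  | m + 1 => by
    obtain ⟨φ⟩ := nonempty_hom_completeGraph m
    obtain ⟨v⟩ := F.nonempty_one
    obtain ⟨j⟩ := F.add_hom m 1
    let ψ : completeGraph (Fin 1) →g F.F 1 :=
      ⟨fun _ => v, fun h => (h.ne (Subsingleton.elim _ _)).elim⟩
    exact ⟨j.comp <| (graphJoin.map φ ψ).comp <| (Hom.ofLE graphJoin.top_top.ge).comp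
      (Iso.completeGraph finSumFinEquiv.symm).toHom⟩

theorem not_cliqueFree (m : ℕ) : ¬(F.F m).CliqueFree m := fun h =>
  IsContained.rfl.not_cliqueFree (h.comap_hom (F.nonempty_hom_completeGraph m).some)

theorem nonempty_hom {α : Type*} [Fintype α] (G : SimpleGraph α) :
    Nonempty (G →g F.F (Fintype.card α)) :=
  ⟨(F.nonempty_hom_completeGraph _).some.comp <|
    (Iso.completeGraph (Fintype.equivFin α)).toHom.comp (Hom.ofLE le_top)⟩

theorem nonempty_fracGraph_scale (n d : ℕ) {c : ℕ} (hc : 0 < c) :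
    Nonempty (fracGraph (F.F n) d →g fracGraph (F.F (n * c)) (d * c)) := by
  obtain ⟨C, hC⟩ : ∃ C, (F.F c).IsNClique c C := by
    simpa [CliqueFree] using F.not_cliqueFree c
  obtain ⟨φ⟩ := F.mul_hom n c
  exact ⟨(fracGraph.map φ).comp (fracGraph.prodHom hC hc)⟩

theorem nonempty_fracGraph_join (n m : ℕ) {d : ℕ} (hd : 0 < d) :
    Nonempty (graphJoin (fracGraph (F.F n) d) (fracGraph (F.F m) d) →g
      fracGraph (F.F (n + m)) d) := by
  obtain ⟨φ⟩ := F.add_hom n m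
  exact ⟨(fracGraph.map φ).comp (fracGraph.joinHom hd)⟩

end SemiringFamily

namespace LinearLikeFamily

variable (F : LinearLikeFamily.{u})

theorem exists_of_isFlat {n : ℕ} {S : Set (F.V n)} (hS : IsFlat (F.F n) S) :
    ∃ k, ¬(F.F n).CliqueFreeOn S k ∧ (F.F n).CliqueFreeOn S (k + 1) ∧
      HomEquiv ((F.F n).induce S) (F.F k) := by
  obtain ⟨k, ⟨s, hs⟩, hfree, hequiv⟩ := F.linearLike n S hS
  exact ⟨k, fun h => (cliqueFree_induce_iff _ _ _).2 h s hs,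
    (cliqueFree_induce_iff _ _ _).1 hfree, hequiv⟩

/-- The flats are `S = A^⊥⊥` and `S' = A^⊥`; they are cross-adjacent, so their clique numbers
add up to at most `N`. -/
theorem exists_flats_of_forall_adj {N : ℕ} (hN : (F.F N).CliqueFree (N + 1))
    {A B : Set (F.V N)} (hAB : ∀ a ∈ A, ∀ b ∈ B, (F.F N).Adj a b) :
    ∃ k k', k + k' ≤ N ∧
      (∃ S, A ⊆ S ∧ (F.F N).CliqueFreeOn S (k + 1) ∧
        HomEquiv ((F.F N).induce S) (F.F k)) ∧
      ∃ S', B ⊆ S' ∧ (F.F N).CliqueFreeOn S' (k' + 1) ∧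
        HomEquiv ((F.F N).induce S') (F.F k') := by
  obtain ⟨k, hk, hk', hS⟩ := F.exists_of_isFlat (isFlat_perp (F.F N) (perp (F.F N) A))
  obtain ⟨k', hl, hl', hS'⟩ := F.exists_of_isFlat (isFlat_perp (F.F N) A)
  refine ⟨k, k', add_le_of_forall_adj hN (A := perp _ (perp _ A)) (B := perp _ A)
    (fun a ha b hb => ha b hb) hk hl,
    ⟨_, subset_perp_perp _ A, hk', hS⟩, _, fun b hb a ha => (hAB a ha b hb).symm, hl', hS'⟩

theorem cliqueFree_succ (t : ℕ) : (F.F t).CliqueFree (t + 1) := by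
  classical
  obtain ⟨m, hm, hm', -, ⟨e⟩⟩ := F.exists_of_isFlat (isFlat_univ (F.F t))
  have hFm : (F.F m).CliqueFree (m + 1) :=
    ((cliqueFree_induce_iff _ _ _).2 hm').comap_hom e
  rw [cliqueFreeOn_univ] at hm'
  have htm : t ≤ m := Nat.lt_succ_iff.1 (hm'.lt_of_not (F.not_cliqueFree t))
  obtain ⟨c, hc⟩ : ∃ c, (F.F m).IsNClique m c := by
    simpa [CliqueFree] using F.not_cliqueFree m
  obtain ⟨T, hTc, hT⟩ := Finset.exists_subset_card_eq (hc.card_eq.symm ▸ htm)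
  have hcross : ∀ a ∈ (T : Set (F.V m)), ∀ b ∈ ((c \ T : Finset _) : Set (F.V m)),
      (F.F m).Adj a b := by
    intro a ha b hb
    rw [Finset.coe_sdiff, Set.mem_sdiff] at hb
    exact hc.isClique (hTc ha) hb.1 fun hab => hb.2 (hab ▸ ha)
  obtain ⟨k, k', hkk', ⟨S, hTS, hS, -, ⟨g⟩⟩, S', hS'c, hS', -⟩ :=
    F.exists_flats_of_forall_adj hFm hcross
  have htk : t ≤ k := Nat.lt_succ_iff.1 <|
    hS.lt_of_not fun h => h hTS ⟨hc.isClique.subset (Finset.coe_subset.2 hTc), hT⟩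
  have hk' : m - t ≤ k' := Nat.lt_succ_iff.1 <|
    hS'.lt_of_not fun h => h hS'c ⟨hc.isClique.subset (Finset.coe_subset.2 Finset.sdiff_subset),
      by rw [Finset.card_sdiff_of_subset hTc, hc.card_eq, hT]⟩
  obtain rfl : k = t := by omega
  exact ((cliqueFree_induce_iff _ _ _).2 hS).comap_hom g

theorem exists_hom_induce_of_forall_adj {N : ℕ} {A B : Set (F.V N)}
    (hAB : ∀ a ∈ A, ∀ b ∈ B, (F.F N).Adj a b) :
    ∃ k k', k + k' ≤ N ∧ Nonempty ((F.F N).induce A →g F.F k) ∧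
      Nonempty ((F.F N).induce B →g F.F k') := by
  obtain ⟨k, k', hkk', ⟨S, hAS, -, ⟨φ⟩, -⟩, S', hBS', -, ⟨ψ⟩, -⟩ :=
    F.exists_flats_of_forall_adj (F.cliqueFree_succ N) hAB
  exact ⟨k, k', hkk', ⟨φ.comp (induceHomOfLE _ hAS).toHom⟩,
    ⟨ψ.comp (induceHomOfLE _ hBS').toHom⟩⟩

variable {α β : Type*} {G : SimpleGraph α} {H : SimpleGraph β}

theorem exists_hom_of_hom_graphJoin {N : ℕ} (f : graphJoin G H →g F.F N) :
    ∃ k k', k + k' ≤ N ∧ Nonempty (G →g F.F k) ∧ Nonempty (H →g F.F k') := by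
  obtain ⟨k, k', hkk', ⟨φ⟩, ⟨ψ⟩⟩ := F.exists_hom_induce_of_forall_adj
    (A := Set.range (f ∘ Sum.inl)) (B := Set.range (f ∘ Sum.inr))
    (by rintro _ ⟨a, rfl⟩ _ ⟨b, rfl⟩; exact f.map_adj (graphJoin.adj_inl_inr a b))
  exact ⟨k, k', hkk', ⟨φ.comp ⟨fun a => ⟨f (.inl a), a, rfl⟩, fun h => f.map_adj h⟩⟩,
    ⟨ψ.comp ⟨fun b => ⟨f (.inr b), b, rfl⟩, fun h => f.map_adj h⟩⟩⟩

theorem exists_fracHom_of_fracHom_graphJoin {N d : ℕ}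
    (f : graphJoin G H →g fracGraph (F.F N) d) :
    ∃ k k', k + k' ≤ N ∧ Nonempty (G →g fracGraph (F.F k) d) ∧
      Nonempty (H →g fracGraph (F.F k') d) := by
  obtain ⟨k, k', hkk', ⟨φ⟩, ⟨ψ⟩⟩ := F.exists_hom_induce_of_forall_adj
    (A := {x | ∃ a, x ∈ (f (.inl a)).1}) (B := {y | ∃ b, y ∈ (f (.inr b)).1})
    fun x ⟨a, hx⟩ y ⟨b, hy⟩ => (f.map_adj (graphJoin.adj_inl_inr a b)).2.2 x hx y hy
  exact ⟨k, k', hkk',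
    ⟨(fracGraph.map φ).comp (fracGraph.codRestrict (f.comp (graphJoin.inlHom G H)) _
      fun a x hx => ⟨a, hx⟩)⟩,
    ⟨(fracGraph.map ψ).comp (fracGraph.codRestrict (f.comp (graphJoin.inrHom G H)) _
      fun b y hy => ⟨b, hy⟩)⟩⟩

end LinearLikeFamily

section Eta

variable (F : SemiringFamily.{u}) {α β : Type*} {G : SimpleGraph α} {H : SimpleGraph β}

theorem etaF_le {n : ℕ} (h : Nonempty (G →g F.F n)) : etaF F G ≤ n :=
  Nat.sInf_le h

theorem nonempty_hom_etaF [Fintype α] (G : SimpleGraph α) : Nonempty (G →g F.F (etaF F G)) :=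
  Nat.sInf_mem (s := {n | Nonempty (G →g F.F n)}) ⟨_, F.nonempty_hom G⟩

theorem etaF_graphJoin_le [Fintype α] [Fintype β] :
    etaF F (graphJoin G H) ≤ etaF F G + etaF F H := by
  obtain ⟨φ⟩ := nonempty_hom_etaF F G
  obtain ⟨ψ⟩ := nonempty_hom_etaF F H
  obtain ⟨j⟩ := F.add_hom (etaF F G) (etaF F H)
  exact etaF_le F ⟨j.comp (graphJoin.map φ ψ)⟩

theorem LinearLikeFamily.le_etaF_graphJoin (F : LinearLikeFamily.{u}) [Fintype α] [Fintype β] :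
    etaF F.toSemiringFamily G + etaF F.toSemiringFamily H ≤
      etaF F.toSemiringFamily (graphJoin G H) := by
  obtain ⟨f⟩ := nonempty_hom_etaF F.toSemiringFamily (graphJoin G H)
  obtain ⟨k, k', hkk', hG, hH⟩ := F.exists_hom_of_hom_graphJoin f
  have := etaF_le _ hG
  have := etaF_le _ hH
  omega

theorem etaFrac_le {n d : ℕ} (hd : 0 < d) (h : Nonempty (G →g fracGraph (F.F n) d)) :
    etaFrac F G ≤ n / d :=
  csInf_le ⟨0, by rintro _ ⟨n, d, -, -, rfl⟩; positivity⟩ ⟨n, d, hd, h, rfl⟩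

theorem le_etaFrac [Fintype α] {c : ℝ}
    (h : ∀ n d : ℕ, 0 < d → Nonempty (G →g fracGraph (F.F n) d) → c ≤ n / d) :
    c ≤ etaFrac F G := by
  refine le_csInf ?_ ?_
  · obtain ⟨φ⟩ := F.nonempty_hom G
    exact ⟨_, _, 1, le_rfl, ⟨(fracGraph.singletonHom _).comp φ⟩, rfl⟩
  · rintro _ ⟨n, d, hd, hφ, rfl⟩
    exact h n d hd hφ

theorem etaFrac_graphJoin_le_add {n d m e : ℕ} (hd : 0 < d) (he : 0 < e)
    (hG : Nonempty (G →g fracGraph (F.F n) d)) (hH : Nonempty (H →g fracGraph (F.F m) e)) :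
    etaFrac F (graphJoin G H) ≤ n / d + m / e := by
  obtain ⟨φ⟩ := hG
  obtain ⟨ψ⟩ := hH
  obtain ⟨σ⟩ := F.nonempty_fracGraph_scale n d he
  obtain ⟨τ⟩ := F.nonempty_fracGraph_scale m e hd
  rw [mul_comm e d] at τ
  obtain ⟨j⟩ := F.nonempty_fracGraph_join (n * e) (m * d) (Nat.mul_pos hd he)
  calc etaFrac F (graphJoin G H) ≤ ((n * e + m * d : ℕ) : ℝ) / (d * e : ℕ) :=
        etaFrac_le F (Nat.mul_pos hd he) ⟨j.comp (graphJoin.map (σ.comp φ) (τ.comp ψ))⟩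
    _ = n / d + m / e := by
        push_cast
        field_simp

theorem etaFrac_graphJoin_le [Fintype α] [Fintype β] :
    etaFrac F (graphJoin G H) ≤ etaFrac F G + etaFrac F H := by
  suffices etaFrac F (graphJoin G H) - etaFrac F H ≤ etaFrac F G by linarith
  refine le_etaFrac F fun n d hd hG => ?_
  rw [sub_le_comm]
  refine le_etaFrac F fun m e he hH => ?_
  linarith [etaFrac_graphJoin_le_add F hd he hG hH]

theorem LinearLikeFamily.le_etaFrac_graphJoin (F : LinearLikeFamily.{u}) [Fintype α]
    [Fintype β] :
    etaFrac F.toSemiringFamily G + etaFrac F.toSemiringFamily H ≤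
      etaFrac F.toSemiringFamily (graphJoin G H) := by
  refine le_etaFrac _ fun N d hd ⟨f⟩ => ?_
  obtain ⟨k, k', hkk', hG, hH⟩ := F.exists_fracHom_of_fracHom_graphJoin f
  calc etaFrac F.toSemiringFamily G + etaFrac F.toSemiringFamily H ≤ k / d + k' / d :=
        add_le_add (etaFrac_le _ hd hG) (etaFrac_le _ hd hH)
    _ = (k + k' : ℕ) / d := by push_cast; ring
    _ ≤ N / d := by gcongr

end Eta

/-- For a linear-like semiring family, the `F`-number and the fractional `F`-number
are additive under joins. -/
theorem linearLike_eta_additive (F : LinearLikeFamily.{u}) {α : Type v} {β : Type w}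
    [Fintype α] [Fintype β] (G : SimpleGraph α) (H : SimpleGraph β) :
    etaF F.toSemiringFamily (graphJoin G H)
        = etaF F.toSemiringFamily G + etaF F.toSemiringFamily H ∧
      etaFrac F.toSemiringFamily (graphJoin G H)
        = etaFrac F.toSemiringFamily G + etaFrac F.toSemiringFamily H :=
  ⟨(etaF_graphJoin_le _).antisymm F.le_etaF_graphJoin,
    (etaFrac_graphJoin_le _).antisymm F.le_etaFrac_graphJoin⟩
end
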